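/- For a prime p, α > 0, integer r, t ≥ 0, and a Bruhat–Schwartz function φ on ℚ_p, let u(x,t) = (Z_r(·,t) ∗ φ)(x) for t > 0 and u(x,0)=φ(x). Then u(·,t) is itself a Bruhat–Schwartz function for every t ≥ 0, and 𝓕_{x→ξ} u(·,t) = e^{-t(max(|ξ|_p,p^r)^α - p^{rα})}·(𝓕φ)(ξ). -/

import Mathlib

open MeasureTheory Filter Topology

noncomputable section

variable (p : ℕ) [Fact p.Prime]

instance : MeasurableSpace ℚ_[p] := borel _
instance : BorelSpace ℚ_[p] := ⟨rfl⟩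

/-- The closed unit ball of `ℚ_[p]` (i.e. `ℤ_p`) as a positive compact set. -/
def padicUnitBall : TopologicalSpace.PositiveCompacts ℚ_[p] where
  carrier := Metric.closedBall 0 1
  isCompact' := isCompact_closedBall 0 1
  interior_nonempty' := ⟨0, mem_interior_iff_mem_nhds.2 (Metric.closedBall_mem_nhds 0 one_pos)⟩

/-- Haar measure on `ℚ_[p]` normalized so that `ℤ_p` has measure 1. -/
def μp : Measure ℚ_[p] := Measure.addHaarMeasure (padicUnitBall p)

/-- The heat kernel `Z_r(x,t) = ∫ χ(-xξ) e^{-t(⟨ξ⟩^α - p^{rα})} dξ`, where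
`⟨ξ⟩ = max(|ξ|_p, p^r)`. -/
def heatKernel (χ : AddChar ℚ_[p] ℂ) (r : ℤ) (α t : ℝ) (x : ℚ_[p]) : ℂ :=
  ∫ ξ, χ (-(x*ξ)) *
    Complex.exp (-((t * ((max ‖ξ‖ ((p:ℝ)^r)) ^ α - (p:ℝ) ^ ((r:ℝ)*α)) : ℝ) : ℂ)) ∂(μp p)

/-- The kernel `K_α(y)`, supported on the ball `|y|_p ≤ p^{-r}`. -/
def Kfun (r : ℤ) (α : ℝ) (y : ℚ_[p]) : ℝ :=
  if ‖y‖ ≤ (p:ℝ)^(-r) then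
    (1 - (p:ℝ)^α)/(1 - (p:ℝ)^(-α-1)) * ‖y‖ ^ (-α-1)
      + (p:ℝ)^((r:ℝ)*(α+1)) * (1 - (p:ℝ)^α)/(1 - (p:ℝ)^(α+1))
  else 0

/-- `u(x,t) = ∫_{|ξ|_p ≤ 1} χ(-xξ) e^{-t(⟨ξ⟩^α - p^{rα})} dξ`, the solution with initial
datum the indicator of the unit ball. -/
def uball (χ : AddChar ℚ_[p] ℂ) (r : ℤ) (α t : ℝ) (x : ℚ_[p]) : ℂ :=
  ∫ ξ in {ξ : ℚ_[p] | ‖ξ‖ ≤ 1}, χ (-(x*ξ)) *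
    Complex.exp (-((t * ((max ‖ξ‖ ((p:ℝ)^r)) ^ α - (p:ℝ) ^ ((r:ℝ)*α)) : ℝ) : ℂ)) ∂(μp p)

/-- The survival probability `S(t) = ∫_{|x|_p ≤ 1} u(x,t) dx`. -/
def Sfun (χ : AddChar ℚ_[p] ℂ) (r : ℤ) (α t : ℝ) : ℂ :=
  ∫ x in {x : ℚ_[p] | ‖x‖ ≤ 1}, uball p χ r α t x ∂(μp p)

/-- The solution `u(x,t) = (Z_r(·,t) ∗ φ)(x)` of the Cauchy problem, with `u(x,0) = φ(x)`. -/
def sol (χ : AddChar ℚ_[p] ℂ) (r : ℤ) (α : ℝ) (φ : ℚ_[p] → ℂ) (t : ℝ) (x : ℚ_[p]) : ℂ :=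
  if t = 0 then φ x else ∫ y, heatKernel p χ r α t (x-y) * φ y ∂(μp p)

/-- The pseudodifferential operator `H^α` with symbol `⟨ξ⟩^α - p^{rα}`:
`H^α g = 𝓕⁻¹[(⟨ξ⟩^α - p^{rα}) 𝓕g]`. -/
def Hop (χ : AddChar ℚ_[p] ℂ) (r : ℤ) (α : ℝ) (g : ℚ_[p] → ℂ) (x : ℚ_[p]) : ℂ :=
  ∫ ξ, χ (-(x*ξ)) * (((max ‖ξ‖ ((p:ℝ)^r)) ^ α - (p:ℝ)^((r:ℝ)*α) : ℝ) : ℂ) *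
    (∫ y, χ (ξ*y) * g y ∂(μp p)) ∂(μp p)

/-- The Laplace transform `G_r(s)` of the density `g(t)`. -/
def Gr (χ : AddChar ℚ_[p] ℂ) (r : ℤ) (α : ℝ) (s : ℝ) : ℂ :=
  ∫ y in {y : ℚ_[p] | 1 < ‖y‖ ∧ ‖y‖ ≤ (p:ℝ)^(-r)}, (Kfun p r α y : ℂ) *
    ∫ ξ in {ξ : ℚ_[p] | ‖ξ‖ ≤ 1},
      χ (-(ξ*y)) / ((s:ℂ) + (((max ‖ξ‖ ((p:ℝ)^r)) ^ α - (p:ℝ)^((r:ℝ)*α) : ℝ) : ℂ)) ∂(μp p) ∂(μp p)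

/-!
Write `ψ_t(ξ) = e^{-t(⟨ξ⟩^α - p^{rα})}`, so that `Z_r(·, t)` is the inverse Fourier transform of
`ψ_t`. Since `⟨ξ⟩ = max(|ξ|_p, p^r)` only depends on the coset `ξ + B_r` of the ball
`B_r = {|ξ|_p ≤ p^r}`, so does `ψ_t`; and `ψ_t` is integrable, decaying super-exponentially in
`⟨ξ⟩`. If `|x|_p > p^{-r}`, some `η ∈ B_r` has `χ(-xη) ≠ 1`, and invariance of `ψ_t` under
translation by `η` forces `Z_r(x, t) = 0`; so `Z_r(·, t)` is supported in `B_{-r}`. By Fubini and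
the orthogonality relation `∫_{B_{-r}} χ(yz) dz = vol(B_{-r}) · 1_{B_r}(y)`, the Fourier transform
of `Z_r(·, t)` is `vol(B_{-r}) vol(B_r) ψ_t`, and `vol(B_{-r}) vol(B_r) = vol(B_0)^2 = 1` because
Haar measure multiplies the volume of a ball by the same factor each time its radius grows by `p`.
Then `u(·, t) = Z_r(·, t) ∗ φ` inherits local constancy from `φ` and compact support from both
factors, and the Fourier transform of the convolution is the product of the Fourier transforms.
-/

open Metric Set
open scoped Pointwise

lemma continuous_of_forall_norm_sub_le {E X : Type*} [SeminormedAddCommGroup E] [TopologicalSpace X]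
    {f : E → X} {R : ℝ} (hR : 0 < R) (hf : ∀ x y, ‖x - y‖ ≤ R → f x = f y) : Continuous f :=
  (IsLocallyConstant.iff_eventually_eq f |>.2 fun x ↦ by
    filter_upwards [closedBall_mem_nhds x hR] with y hy
    exact hf y x (mem_closedBall_iff_norm.1 hy)).continuous

lemma max_norm_eq_of_norm_sub_le {E : Type*} [SeminormedAddCommGroup E] [IsUltrametricDist E]
    {x y : E} {R : ℝ} (h : ‖x - y‖ ≤ R) : max ‖x‖ R = max ‖y‖ R := by
  have key : ∀ {a b : E}, ‖a - b‖ ≤ R → max ‖a‖ R ≤ max ‖b‖ R := fun {a b} hab ↦ by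
    have := IsUltrametricDist.norm_add_le_max (a - b) b
    rw [sub_add_cancel] at this
    exact max_le (this.trans (max_le (hab.trans (le_max_right _ _)) (le_max_left _ _)))
      (le_max_right _ _)
  exact (key h).antisymm (key (by rwa [norm_sub_rev]))

lemma convolution_eq_zero {E : Type*} [NormedAddCommGroup E] [IsUltrametricDist E]
    [MeasurableSpace E] {μ : Measure E} {K φ : E → ℂ} {a b : ℝ} (hK : ∀ z, a < ‖z‖ → K z = 0)
    (hφ : ∀ y, b < ‖y‖ → φ y = 0) {x : E} (hxa : a < ‖x‖) (hxb : b < ‖x‖) :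
    ∫ y, K (x - y) * φ y ∂μ = 0 := by
  refine integral_eq_zero_of_ae (ae_of_all _ fun y ↦ ?_)
  by_cases hy : b < ‖y‖
  · simp [hφ y hy]
  have hxy : ‖x‖ ≤ ‖x - y‖ := by
    have := IsUltrametricDist.norm_add_le_max (x - y) y
    rw [sub_add_cancel] at this
    exact (le_max_iff.1 this).resolve_right (not_le.2 ((not_lt.1 hy).trans_lt hxb))
  simp [hK (x - y) (hxa.trans_le hxy)]

lemma integrable_of_continuous_of_eq_zero {E : Type*} [NormedAddCommGroup E] [ProperSpace E]
    [MeasurableSpace E] [BorelSpace E] {μ : Measure E} [IsFiniteMeasureOnCompacts μ]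
    {f : E → ℂ} (hf : Continuous f) {R : ℝ} (hR : ∀ x, R < ‖x‖ → f x = 0) : Integrable f μ :=
  hf.integrable_of_hasCompactSupport <| .intro (isCompact_closedBall 0 R) fun x hx ↦
    hR x (not_le.1 (mt mem_closedBall_zero_iff.2 hx))

lemma AddChar.integral_mul_eq_zero {G : Type*} [AddGroup G] [MeasurableSpace G]
    [MeasurableAdd G] {ν : Measure G} [ν.IsAddRightInvariant] (ψ : AddChar G ℂ) {f : G → ℂ}
    {η : G} (hf : ∀ ξ, f (ξ + η) = f ξ) (hη : ψ η ≠ 1) : ∫ ξ, ψ ξ * f ξ ∂ν = 0 := by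
  have h : ∫ ξ, ψ ξ * f ξ ∂ν = ψ η * ∫ ξ, ψ ξ * f ξ ∂ν := by
    conv_lhs => rw [← integral_add_right_eq_self _ η]
    rw [← integral_const_mul]
    simp only [AddChar.map_add_eq_mul, hf]
    congr 1; ext; ring
  have : (ψ η - 1) * ∫ ξ, ψ ξ * f ξ ∂ν = 0 := by rw [sub_mul, ← h]; ring
  exact (mul_eq_zero.1 this).resolve_left (sub_ne_zero.2 hη)

lemma summable_pow_mul_exp_neg_mul_pow {c a t : ℝ} (hc : 0 < c) (ha : 1 < a) (ht : 0 < t) :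
    Summable fun k : ℕ ↦ c ^ k * Real.exp (-(t * a ^ k)) := by
  have hstep : ∀ k : ℕ, c ^ (k + 1) * Real.exp (-(t * a ^ (k + 1))) =
      c * Real.exp (-(t * (a - 1) * a ^ k)) * (c ^ k * Real.exp (-(t * a ^ k))) := fun k ↦ by
    rw [mul_mul_mul_comm, ← pow_succ', ← Real.exp_add]
    ring_nf
  refine summable_of_ratio_test_tendsto_lt_one zero_lt_one (.of_forall fun k ↦ by positivity) ?_
  have hlim : Tendsto (fun k : ℕ ↦ c * Real.exp (-(t * (a - 1) * a ^ k))) atTop (𝓝 0) := by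
    simpa using (Real.tendsto_exp_neg_atTop_nhds_zero.comp
      ((tendsto_pow_atTop_atTop_of_one_lt ha).const_mul_atTop
        (mul_pos ht (sub_pos.2 ha)))).const_mul c
  refine hlim.congr fun k ↦ ?_
  rw [hstep, norm_mul, mul_div_cancel_right₀ _ (norm_ne_zero_iff.2 (by positivity)),
    Real.norm_of_nonneg (by positivity)]

instance : (μp p).IsAddHaarMeasure := Measure.isAddHaarMeasure_addHaarMeasure _

lemma one_lt_p : (1 : ℝ) < p := mod_cast (Fact.out : p.Prime).one_lt

lemma p_pos : (0 : ℝ) < p := zero_lt_one.trans (one_lt_p p)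

def pInvUnit : ℚ_[p]ˣ :=
  Units.mk0 ((p : ℚ_[p])⁻¹) (inv_ne_zero (mod_cast (Fact.out : p.Prime).ne_zero))

lemma pInvUnit_zpow_smul_closedBall (n : ℤ) :
    pInvUnit p ^ n • closedBall (0 : ℚ_[p]) 1 = closedBall 0 ((p : ℝ) ^ n) := by
  change ((pInvUnit p ^ n : ℚ_[p]ˣ) : ℚ_[p]) • closedBall (0 : ℚ_[p]) 1 = _
  rw [_root_.smul_closedBall _ _ zero_le_one, smul_zero, mul_one, Units.val_zpow_eq_zpow_val]
  simp [pInvUnit]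

-- The modulus of `p⁻¹`; it equals `p`, but positivity is all the argument needs.
def haarScale : ℝ := distribHaarChar ℚ_[p] (pInvUnit p)

lemma haarScale_pos : 0 < haarScale p := NNReal.coe_pos.2 distribHaarChar_pos

lemma measureReal_closedBall_zpow (μ : Measure ℚ_[p]) [μ.IsAddHaarMeasure] (n : ℤ) :
    μ.real (closedBall 0 ((p : ℝ) ^ n)) = haarScale p ^ n * μ.real (closedBall 0 1) := by
  rw [← pInvUnit_zpow_smul_closedBall, measureReal_def, ← distribHaarChar_mul, map_zpow,
    ENNReal.toReal_mul, ENNReal.coe_toReal, NNReal.coe_zpow]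
  rfl

lemma μp_real_closedBall_zpow (n : ℤ) :
    (μp p).real (closedBall 0 ((p : ℝ) ^ n)) = haarScale p ^ n := by
  rw [measureReal_closedBall_zpow, measureReal_def]
  have : μp p (closedBall 0 1) = 1 := Measure.addHaarMeasure_self
  simp [this]

lemma μp_real_closedBall_neg_mul (n : ℤ) :
    (μp p).real (closedBall 0 ((p : ℝ) ^ (-n))) * (μp p).real (closedBall 0 ((p : ℝ) ^ n)) = 1 := by
  rw [μp_real_closedBall_zpow, μp_real_closedBall_zpow, ← zpow_add₀ (haarScale_pos p).ne',
    neg_add_cancel, zpow_zero]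

def ConstOnBalls {E : Type*} (n : ℤ) (f : ℚ_[p] → E) : Prop :=
  ∀ x y : ℚ_[p], ‖x - y‖ ≤ (p : ℝ) ^ n → f x = f y

lemma constOnBalls_indicator_closedBall {E : Type*} [Zero E] (n : ℤ) (f : E) :
    ConstOnBalls p n ((closedBall (0 : ℚ_[p]) ((p : ℝ) ^ n)).indicator fun _ ↦ f) := by
  intro x y hxy
  have : x ∈ closedBall (0 : ℚ_[p]) ((p : ℝ) ^ n) ↔ y ∈ closedBall 0 ((p : ℝ) ^ n) := by
    rw [mem_closedBall_comm, mem_closedBall_comm (x := y),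
      IsUltrametricDist.closedBall_eq_of_mem (mem_closedBall_iff_norm.2 (by rwa [norm_sub_rev]))]
  by_cases hx : x ∈ closedBall (0 : ℚ_[p]) ((p : ℝ) ^ n)
  · simp [hx, this.1 hx]
  · simp [hx, mt this.2 hx]

section Character

variable {μ : Measure ℚ_[p]} [μ.IsAddHaarMeasure] {χ : AddChar ℚ_[p] ℂ}
  (hχ : ∀ y : ℚ_[p], χ y = 1 ↔ ‖y‖ ≤ 1) {ψ : ℚ_[p] → ℂ}
include hχ

lemma addChar_eq_of_norm_sub_le_one {x y : ℚ_[p]} (h : ‖x - y‖ ≤ 1) : χ x = χ y := by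
  rw [← sub_add_cancel x y, AddChar.map_add_eq_mul, (hχ _).2 h, one_mul]

lemma continuous_addChar : Continuous χ :=
  continuous_of_forall_norm_sub_le one_pos fun _ _ ↦ addChar_eq_of_norm_sub_le_one p hχ

lemma norm_addChar (y : ℚ_[p]) : ‖χ y‖ = 1 := by
  obtain ⟨k, hk⟩ := pow_unbounded_of_one_lt ‖y‖ (one_lt_p p)
  refine Complex.norm_eq_one_of_pow_eq_one (n := p ^ k) ?_
    (pow_ne_zero _ (Fact.out : p.Prime).ne_zero)
  rw [← AddChar.map_nsmul_eq_pow, hχ, nsmul_eq_mul, norm_mul, Nat.cast_pow, norm_pow,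
    Padic.norm_p, inv_pow, inv_mul_le_one₀ (pow_pos (p_pos p) k)]
  exact hk.le

lemma integral_addChar_mul_eq_zero {f : ℚ_[p] → ℂ} {n : ℤ} (hf : ConstOnBalls p n f)
    {x : ℚ_[p]} (hx : (p : ℝ) ^ (-n) < ‖x‖) : ∫ ξ, χ (x * ξ) * f ξ ∂μ = 0 := by
  have hη : ‖(p : ℚ_[p]) ^ (-n)‖ = (p : ℝ) ^ n := by rw [Padic.norm_p_zpow, neg_neg]
  refine (χ.mulShift x).integral_mul_eq_zero (η := (p : ℚ_[p]) ^ (-n))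
    (fun ξ ↦ hf _ _ (by rw [add_sub_cancel_left, hη])) fun h ↦ ?_
  have h1 := (hχ _).1 (by rwa [AddChar.mulShift_apply] at h)
  rw [norm_mul, hη, ← le_div_iff₀ (zpow_pos (p_pos p) n), one_div, ← zpow_neg] at h1
  exact h1.not_gt hx

lemma setIntegral_closedBall_addChar (n : ℤ) (x : ℚ_[p]) :
    ∫ ξ in closedBall 0 ((p : ℝ) ^ n), χ (x * ξ) ∂μ =
      if ‖x‖ ≤ (p : ℝ) ^ (-n) then μ.real (closedBall 0 ((p : ℝ) ^ n)) else 0 := by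
  split_ifs with hx
  · have hone : ∀ ξ ∈ closedBall (0 : ℚ_[p]) ((p : ℝ) ^ n), χ (x * ξ) = 1 := fun ξ hξ ↦ by
      rw [hχ, norm_mul]
      calc ‖x‖ * ‖ξ‖ ≤ (p : ℝ) ^ (-n) * (p : ℝ) ^ n :=
            mul_le_mul hx (mem_closedBall_zero_iff.1 hξ) (norm_nonneg _) (by positivity)
        _ = 1 := by rw [← zpow_add₀ (p_pos p).ne', neg_add_cancel, zpow_zero]
    rw [setIntegral_congr_fun measurableSet_closedBall hone, setIntegral_const, Complex.real_smul,
      mul_one]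
  · rw [← integral_indicator measurableSet_closedBall, Complex.ofReal_zero,
      ← integral_addChar_mul_eq_zero p hχ (constOnBalls_indicator_closedBall p n (1 : ℂ))
        (not_le.1 hx) (μ := μ)]
    congr 1 with ξ
    by_cases hξ : ξ ∈ closedBall (0 : ℚ_[p]) ((p : ℝ) ^ n) <;> simp [hξ]

lemma integral_addChar_neg_mul_eq_zero {r : ℤ} (hψ : ConstOnBalls p r ψ) {x : ℚ_[p]}
    (hx : (p : ℝ) ^ (-r) < ‖x‖) : ∫ ξ, χ (-(x * ξ)) * ψ ξ ∂μ = 0 := by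
  simp_rw [← neg_mul]
  exact integral_addChar_mul_eq_zero p hχ hψ (by rwa [norm_neg])

lemma integral_addChar_mul_integral_addChar_neg_mul {r : ℤ} (hψ : ConstOnBalls p r ψ)
    (hψi : Integrable ψ μ) (ξ : ℚ_[p]) :
    ∫ z, χ (ξ * z) * ∫ w, χ (-(z * w)) * ψ w ∂μ ∂μ =
      μ.real (closedBall 0 ((p : ℝ) ^ (-r))) * μ.real (closedBall 0 ((p : ℝ) ^ r)) * ψ ξ := by
  set B := closedBall (0 : ℚ_[p]) ((p : ℝ) ^ (-r))
  have hχc := continuous_addChar p hχ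
  have : IsFiniteMeasure (μ.restrict B) :=
    isFiniteMeasure_restrict.2 (isCompact_closedBall _ _).measure_lt_top.ne
  have hint : Integrable (fun q : ℚ_[p] × ℚ_[p] ↦ χ (ξ * q.1) * (χ (-(q.1 * q.2)) * ψ q.2))
      ((μ.restrict B).prod μ) := by
    have := ((integrable_const (1 : ℂ) : Integrable (fun _ ↦ (1 : ℂ)) (μ.restrict B)).mul_prod
      hψi).bdd_mul (c := 1)
      (f := fun q : ℚ_[p] × ℚ_[p] ↦ χ (ξ * q.1) * χ (-(q.1 * q.2)))
      (by fun_prop) (ae_of_all _ fun q ↦ by simp [norm_addChar p hχ])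
    simpa only [one_mul, mul_assoc] using this
  have hinner : ∀ w, ∫ z in B, χ (ξ * z) * (χ (-(z * w)) * ψ w) ∂μ =
      (closedBall ξ ((p : ℝ) ^ r)).indicator (fun w ↦ μ.real B * ψ w) w := by
    intro w
    have : ∀ z, χ (ξ * z) * (χ (-(z * w)) * ψ w) = ψ w * χ ((ξ - w) * z) := fun z ↦ by
      rw [sub_mul, sub_eq_add_neg, AddChar.map_add_eq_mul, mul_comm w z]; ring
    simp_rw [this]
    rw [integral_const_mul, setIntegral_closedBall_addChar p hχ, neg_neg]
    by_cases hw : w ∈ closedBall ξ ((p : ℝ) ^ r)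
    · rw [if_pos (by rwa [mem_closedBall_iff_norm, norm_sub_rev] at hw), Set.indicator_of_mem hw,
        mul_comm]
    · rw [if_neg (by rwa [mem_closedBall_iff_norm, norm_sub_rev] at hw), Set.indicator_of_notMem hw,
        Complex.ofReal_zero, mul_zero]
  calc ∫ z, χ (ξ * z) * ∫ w, χ (-(z * w)) * ψ w ∂μ ∂μ
      = ∫ z in B, ∫ w, χ (ξ * z) * (χ (-(z * w)) * ψ w) ∂μ ∂μ := by
        rw [← setIntegral_eq_integral_of_forall_compl_eq_zero (s := B) fun z hz ↦ by
          rw [integral_addChar_neg_mul_eq_zero p hχ hψ (not_le.1 (mt mem_closedBall_zero_iff.2 hz)),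
            mul_zero]]
        simp_rw [integral_const_mul]
    _ = ∫ w, ∫ z in B, χ (ξ * z) * (χ (-(z * w)) * ψ w) ∂μ ∂μ := integral_integral_swap hint
    _ = ∫ w in closedBall ξ ((p : ℝ) ^ r), μ.real B * ψ ξ ∂μ := by
        simp_rw [hinner]
        rw [integral_indicator measurableSet_closedBall]
        refine setIntegral_congr_fun measurableSet_closedBall fun w hw ↦ ?_
        rw [hψ w ξ (mem_closedBall_iff_norm.1 hw)]
    _ = _ := by
        rw [setIntegral_const, Complex.real_smul, measureReal_def,
          Measure.addHaar_closedBall_center, ← measureReal_def]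
        ring

end Character

lemma continuous_integral_addChar_neg_mul {μ : Measure ℚ_[p]} {χ : AddChar ℚ_[p] ℂ}
    (hχ : ∀ y : ℚ_[p], χ y = 1 ↔ ‖y‖ ≤ 1) {ψ : ℚ_[p] → ℂ} (hψi : Integrable ψ μ) :
    Continuous fun x ↦ ∫ ξ, χ (-(x * ξ)) * ψ ξ ∂μ := by
  have hχc := continuous_addChar p hχ
  refine continuous_of_dominated (bound := fun ξ ↦ ‖ψ ξ‖) (fun x ↦ ?_) (fun x ↦ ?_) hψi.norm
    (ae_of_all _ fun ξ ↦ by fun_prop)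
  · exact ((hχc.comp (by fun_prop)).aestronglyMeasurable).mul hψi.aestronglyMeasurable
  · exact ae_of_all _ fun ξ ↦ by rw [norm_mul, norm_addChar p hχ, one_mul]

lemma integral_addChar_mul_convolution {μ : Measure ℚ_[p]} [μ.IsAddHaarMeasure]
    {χ : AddChar ℚ_[p] ℂ} (hχ : ∀ y : ℚ_[p], χ y = 1 ↔ ‖y‖ ≤ 1) {f g : ℚ_[p] → ℂ}
    (hf : Integrable f μ) (hg : Integrable g μ) (ξ : ℚ_[p]) :
    ∫ x, χ (ξ * x) * ∫ y, f (x - y) * g y ∂μ ∂μ =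
      (∫ x, χ (ξ * x) * f x ∂μ) * ∫ y, χ (ξ * y) * g y ∂μ := by
  have hint : Integrable (fun q : ℚ_[p] × ℚ_[p] ↦ χ (ξ * q.1) * (f (q.1 - q.2) * g q.2))
      (μ.prod μ) := by
    have := (hg.convolution_integrand (ContinuousLinearMap.mul ℂ ℂ) hf).bdd_mul (c := 1)
      (f := fun q : ℚ_[p] × ℚ_[p] ↦ χ (ξ * q.1))
      ((continuous_addChar p hχ).comp (by fun_prop)).aestronglyMeasurable
      (ae_of_all _ fun q ↦ (norm_addChar p hχ _).le)
    simpa only [ContinuousLinearMap.mul_apply', mul_comm (g _)] using this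
  have hinner : ∀ y, ∫ x, χ (ξ * x) * (f (x - y) * g y) ∂μ =
      (∫ x, χ (ξ * x) * f x ∂μ) * (χ (ξ * y) * g y) := fun y ↦ by
    rw [← integral_add_right_eq_self _ y, ← integral_mul_const]
    congr 1 with z
    rw [add_sub_cancel_right, mul_add, AddChar.map_add_eq_mul]
    ring
  calc ∫ x, χ (ξ * x) * ∫ y, f (x - y) * g y ∂μ ∂μ
      = ∫ x, ∫ y, χ (ξ * x) * (f (x - y) * g y) ∂μ ∂μ := by simp_rw [integral_const_mul]
    _ = ∫ y, ∫ x, χ (ξ * x) * (f (x - y) * g y) ∂μ ∂μ := integral_integral_swap hint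
    _ = _ := by simp_rw [hinner, integral_const_mul]

lemma constOnBalls_convolution {μ : Measure ℚ_[p]} [μ.IsAddHaarMeasure] {K φ : ℚ_[p] → ℂ} {n : ℤ}
    (hφ : ConstOnBalls p n φ) :
    ConstOnBalls p n fun x ↦ ∫ y, K (x - y) * φ y ∂μ := by
  have hswap : ∀ x, ∫ y, K (x - y) * φ y ∂μ = ∫ y, K y * φ (x - y) ∂μ := fun x ↦ by
    rw [← integral_sub_left_eq_self _ μ x]
    simp_rw [sub_sub_cancel]
  intro x x' h
  dsimp only
  rw [hswap, hswap]
  congr 1 with y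
  rw [hφ (x - y) (x' - y) (by rwa [sub_sub_sub_cancel_right])]

def heatMultiplier (r : ℤ) (α t : ℝ) (ξ : ℚ_[p]) : ℂ :=
  Complex.exp (-((t * ((max ‖ξ‖ ((p:ℝ)^r)) ^ α - (p:ℝ) ^ ((r:ℝ)*α)) : ℝ) : ℂ))

section HeatMultiplier

variable {r : ℤ} {α t : ℝ}

lemma norm_heatMultiplier (ξ : ℚ_[p]) : ‖heatMultiplier p r α t ξ‖ =
    Real.exp (-(t * ((max ‖ξ‖ ((p:ℝ)^r)) ^ α - (p:ℝ) ^ ((r:ℝ)*α)))) := by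
  rw [heatMultiplier, ← Complex.ofReal_neg, Complex.norm_exp_ofReal]

lemma constOnBalls_heatMultiplier : ConstOnBalls p r (heatMultiplier p r α t) := fun x y h ↦ by
  rw [heatMultiplier, heatMultiplier, max_norm_eq_of_norm_sub_le h]

lemma continuous_heatMultiplier : Continuous (heatMultiplier p r α t) := by
  have : Continuous fun ξ : ℚ_[p] ↦ (max ‖ξ‖ ((p:ℝ)^r)) ^ α :=
    (continuous_norm.max continuous_const).rpow_const fun ξ ↦
      .inl (lt_max_of_lt_right (zpow_pos (p_pos p) r)).ne'
  unfold heatMultiplier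
  fun_prop

-- Bounding `max ‖ξ‖ (p ^ r)` rather than `‖ξ‖` from below makes `shell p r 0` the whole ball.
def shell (r : ℤ) (k : ℕ) : Set ℚ_[p] :=
  closedBall 0 ((p : ℝ) ^ (r + k)) ∩ {ξ | (p : ℝ) ^ (r + k - 1) ≤ max ‖ξ‖ ((p : ℝ) ^ r)}

lemma iUnion_shell_eq_univ (r : ℤ) : ⋃ k, shell p r k = univ := by
  refine eq_univ_of_forall fun ξ ↦ mem_iUnion.2 ?_
  obtain ⟨m, hm₁, hm₂⟩ := exists_mem_Ioc_zpow (lt_max_of_lt_right (zpow_pos (p_pos p) r))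
    (one_lt_p p) (x := max ‖ξ‖ ((p : ℝ) ^ r))
  have hrm : r ≤ m + 1 :=
    (zpow_le_zpow_iff_right₀ (one_lt_p p)).1 ((le_max_right _ _).trans hm₂)
  refine ⟨(m + 1 - r).toNat, mem_closedBall_zero_iff.2 ?_, ?_⟩
  · rw [Int.toNat_of_nonneg (by omega), add_sub_cancel]
    exact (le_max_left _ _).trans hm₂
  · rw [mem_ofPred_eq, Int.toNat_of_nonneg (by omega), add_sub_cancel, add_sub_cancel_right]
    exact hm₁.le

lemma integrable_heatMultiplier (μ : Measure ℚ_[p]) [μ.IsAddHaarMeasure] (hα : 0 < α)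
    (ht : 0 < t) : Integrable (heatMultiplier p r α t) μ := by
  set P := (p:ℝ) ^ ((r:ℝ)*α)
  set e : ℕ → ℝ := fun k ↦ Real.exp (-(t * (((p : ℝ) ^ (r + k - 1)) ^ α - P)))
  have hbound : ∀ k, ∀ ξ ∈ shell p r k, ‖heatMultiplier p r α t ξ‖ ≤ e k :=
    fun k ξ hξ ↦ by
      rw [norm_heatMultiplier, Real.exp_le_exp, neg_le_neg_iff]
      gcongr
      exact hξ.2
  have he : ∀ k : ℕ, e k * μ.real (closedBall 0 ((p : ℝ) ^ (r + k))) =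
      Real.exp (t * P) * haarScale p ^ r * μ.real (closedBall 0 1) *
        (haarScale p ^ k * Real.exp (-(t * ((p : ℝ) ^ (r - 1)) ^ α * ((p : ℝ) ^ α) ^ k))) := by
    intro k
    have hpow : ((p : ℝ) ^ (r + k - 1)) ^ α = ((p : ℝ) ^ (r - 1)) ^ α * ((p : ℝ) ^ α) ^ k := by
      rw [show r + k - 1 = (r - 1) + k by ring, zpow_add₀ (p_pos p).ne', zpow_natCast,
        Real.mul_rpow (by positivity) (by positivity), Real.rpow_pow_comm (p_pos p).le]
    simp only [e, measureReal_closedBall_zpow, zpow_add₀ (haarScale_pos p).ne', zpow_natCast, hpow]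
    rw [show -(t * (((p : ℝ) ^ (r - 1)) ^ α * ((p : ℝ) ^ α) ^ k - P)) =
      t * P + -(t * ((p : ℝ) ^ (r - 1)) ^ α * ((p : ℝ) ^ α) ^ k) by ring, Real.exp_add]
    ring
  have hsum := ((summable_pow_mul_exp_neg_mul_pow (haarScale_pos p)
    (Real.one_lt_rpow (one_lt_p p) hα)
    (mul_pos ht (Real.rpow_pos_of_pos (zpow_pos (p_pos p) _) _))).mul_left
      (Real.exp (t * P) * haarScale p ^ r * μ.real (closedBall 0 1))).congr fun k ↦ (he k).symm
  rw [← integrableOn_univ, ← iUnion_shell_eq_univ p r]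
  refine integrableOn_iUnion_of_summable_integral_norm (fun k ↦ ?_) ?_
  · exact ((continuous_heatMultiplier p).continuousOn.integrableOn_compact
      (isCompact_closedBall _ _)).mono_set inter_subset_left
  refine hsum.of_nonneg_of_le (fun k ↦ integral_nonneg fun _ ↦ norm_nonneg _) fun k ↦ ?_
  refine (le_abs_self _).trans ((norm_setIntegral_le_of_norm_le_const ((measure_mono
    inter_subset_left).trans_lt (isCompact_closedBall _ _).measure_lt_top) fun ξ hξ ↦
      (norm_norm _).trans_le (hbound k ξ hξ)).trans ?_)
  gcongr
  · exact (isCompact_closedBall _ _).measure_lt_top.ne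
  · exact inter_subset_left

end HeatMultiplier

section HeatKernel

variable {χ : AddChar ℚ_[p] ℂ} (hχ : ∀ y : ℚ_[p], χ y = 1 ↔ ‖y‖ ≤ 1) {r : ℤ} {α t : ℝ}
include hχ

lemma heatKernel_eq_zero {x : ℚ_[p]} (hx : (p : ℝ) ^ (-r) < ‖x‖) : heatKernel p χ r α t x = 0 :=
  integral_addChar_neg_mul_eq_zero p hχ (constOnBalls_heatMultiplier p) hx

lemma integrable_heatKernel (hα : 0 < α) (ht : 0 < t) : Integrable (heatKernel p χ r α t) (μp p) :=
  integrable_of_continuous_of_eq_zero (continuous_integral_addChar_neg_mul p hχ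
    (integrable_heatMultiplier p _ hα ht)) fun _ ↦ heatKernel_eq_zero p hχ

lemma integral_addChar_mul_heatKernel (hα : 0 < α) (ht : 0 < t) (ξ : ℚ_[p]) :
    ∫ z, χ (ξ * z) * heatKernel p χ r α t z ∂(μp p) = heatMultiplier p r α t ξ := by
  have := integral_addChar_mul_integral_addChar_neg_mul p hχ
    (constOnBalls_heatMultiplier p (r := r)) (integrable_heatMultiplier p (μp p) hα ht) ξ
  rwa [← Complex.ofReal_mul, μp_real_closedBall_neg_mul, Complex.ofReal_one, one_mul] at this

end HeatKernel

theorem stmt17 (χ : AddChar ℚ_[p] ℂ) (hχ : ∀ y : ℚ_[p], χ y = 1 ↔ ‖y‖ ≤ 1) (r : ℤ) (α : ℝ) (hα : 0 < α)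
    (φ : ℚ_[p] → ℂ)
    (hφconst : ∃ n : ℤ, ∀ x y : ℚ_[p], ‖x - y‖ ≤ (p:ℝ)^n → φ x = φ y)
    (hφsupp : ∃ m : ℤ, ∀ x : ℚ_[p], (p:ℝ)^m < ‖x‖ → φ x = 0) :
    ∀ t : ℝ, 0 ≤ t →
      ((∃ n : ℤ, ∀ x y : ℚ_[p], ‖x - y‖ ≤ (p:ℝ)^n →
          sol p χ r α φ t x = sol p χ r α φ t y) ∧
       (∃ m : ℤ, ∀ x : ℚ_[p], (p:ℝ)^m < ‖x‖ → sol p χ r α φ t x = 0) ∧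
       (∀ ξ : ℚ_[p], (∫ x, (χ (ξ*x) : ℂ) * sol p χ r α φ t x ∂(μp p))
          = Complex.exp (-((t * ((max ‖ξ‖ ((p:ℝ)^r)) ^ α - (p:ℝ)^((r:ℝ)*α)) : ℝ) : ℂ)) *
            ∫ x, (χ (ξ*x) : ℂ) * φ x ∂(μp p))) := by
  obtain ⟨n, hn⟩ := hφconst
  obtain ⟨m, hm⟩ := hφsupp
  intro t ht
  rcases ht.eq_or_lt with rfl | ht
  · simp only [sol, zero_mul, Complex.ofReal_zero, neg_zero, Complex.exp_zero, one_mul]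
    exact ⟨⟨n, hn⟩, ⟨m, hm⟩, fun _ ↦ rfl⟩
  have hsol : sol p χ r α φ t = fun x ↦ ∫ y, heatKernel p χ r α t (x - y) * φ y ∂(μp p) :=
    funext fun x ↦ if_neg ht.ne'
  have hφi : Integrable φ (μp p) := integrable_of_continuous_of_eq_zero
    (continuous_of_forall_norm_sub_le (zpow_pos (p_pos p) n) hn) hm
  rw [hsol]
  refine ⟨⟨n, constOnBalls_convolution p hn⟩, ⟨max m (-r), fun x hx ↦ ?_⟩, fun ξ ↦ ?_⟩
  · exact convolution_eq_zero (fun _ ↦ heatKernel_eq_zero p hχ) hm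
      ((zpow_le_zpow_right₀ (one_lt_p p).le (le_max_right _ _)).trans_lt hx)
      ((zpow_le_zpow_right₀ (one_lt_p p).le (le_max_left _ _)).trans_lt hx)
  · rw [integral_addChar_mul_convolution p hχ (integrable_heatKernel p hχ hα ht) hφi,
      integral_addChar_mul_heatKernel p hχ hα ht, heatMultiplier]

end
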